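/- With the coface maps of the complex C_X^*(A,m) as above (C cocommutative, X a right C-comodule, m : C → Hom(A⊗A,A) convolution-associative), the cosimplicial identity d_1^{n+1} ∘ d_0^n = d_0^{n+1} ∘ d_0^n holds. -/

import Mathlib

open TensorProduct PiTensorProduct

noncomputable section

namespace DefCx

variable {k : Type*} [Field k]
variable {A : Type*} [AddCommGroup A] [Module k A]

/-- Cast between tensor powers of `A` with equal exponents. -/
def tcastA {a b : ℕ} (h : a = b) : (⨂[k] (_ : Fin a), A) ≃ₗ[k] ⨂[k] (_ : Fin b), A :=
  PiTensorProduct.reindex k (fun _ => A) (finCongr h)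

/-- `A^{⊗1} ≃ A`. -/
def oneE : (⨂[k] (_ : Fin 1), A) ≃ₗ[k] A := PiTensorProduct.subsingletonEquiv 0

/-- `A^{⊗a} ⊗ A^{⊗b} ≃ A^{⊗(a+b)}`. -/
def glueA (a b : ℕ) :
    ((⨂[k] (_ : Fin a), A) ⊗[k] (⨂[k] (_ : Fin b), A)) ≃ₗ[k] ⨂[k] (_ : Fin (a + b)), A :=
  (PiTensorProduct.tmulEquiv k A).trans (PiTensorProduct.reindex k (fun _ => A) finSumFinEquiv)

/-- Splitting off the first tensorand: `A^{⊗(n+1)} ≃ A ⊗ A^{⊗n}`. -/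
def splitFirst (n : ℕ) :
    (⨂[k] (_ : Fin (n + 1)), A) ≃ₗ[k] A ⊗[k] (⨂[k] (_ : Fin n), A) :=
  (((TensorProduct.congr (oneE (k := k) (A := A)).symm (LinearEquiv.refl k _)).trans
    (glueA 1 n)).trans (tcastA (by omega))).symm

/-- Splitting off the last tensorand: `A^{⊗(n+1)} ≃ A^{⊗n} ⊗ A`. -/
def splitLast (n : ℕ) :
    (⨂[k] (_ : Fin (n + 1)), A) ≃ₗ[k] (⨂[k] (_ : Fin n), A) ⊗[k] A :=
  ((TensorProduct.congr (LinearEquiv.refl k _) (oneE (k := k) (A := A)).symm).trans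
    (glueA n 1)).symm

/-- `A ⊗ A ≃ A^{⊗2}`. -/
def pairE : (A ⊗[k] A) ≃ₗ[k] ⨂[k] (_ : Fin 2), A :=
  (TensorProduct.congr (oneE (k := k) (A := A)).symm (oneE (k := k) (A := A)).symm).trans
    (glueA 1 1)

/-- `A^{⊗(a+2+b)} ≃ (A^{⊗a} ⊗ (A⊗A)) ⊗ A^{⊗b}`. -/
def midSplit (a b : ℕ) :
    (⨂[k] (_ : Fin (a + 2 + b)), A) ≃ₗ[k]
      ((⨂[k] (_ : Fin a), A) ⊗[k] (A ⊗[k] A)) ⊗[k] (⨂[k] (_ : Fin b), A) :=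
  (((TensorProduct.congr (TensorProduct.congr (LinearEquiv.refl k _)
      (pairE (k := k) (A := A))) (LinearEquiv.refl k _)).trans
    (TensorProduct.congr (glueA a 2) (LinearEquiv.refl k _))).trans (glueA (a + 2) b)).symm

/-- `(A^{⊗a} ⊗ A) ⊗ A^{⊗b} ≃ A^{⊗(a+1+b)}`. -/
def midAssemble (a b : ℕ) :
    (((⨂[k] (_ : Fin a), A) ⊗[k] A) ⊗[k] (⨂[k] (_ : Fin b), A)) ≃ₗ[k]
      ⨂[k] (_ : Fin (a + 1 + b)), A :=
  ((TensorProduct.congr (TensorProduct.congr (LinearEquiv.refl k _)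
      (oneE (k := k) (A := A)).symm) (LinearEquiv.refl k _)).trans
    (TensorProduct.congr (glueA a 1) (LinearEquiv.refl k _))).trans (glueA (a + 1) b)

/-- Apply `g : A ⊗ A → A` to the tensorands in positions `a+1, a+2` of `A^{⊗(a+2+b)}`:
this is `id^{⊗a} ⊗ g ⊗ id^{⊗b}`. -/
def insertMul (a b : ℕ) (g : A ⊗[k] A →ₗ[k] A) :
    (⨂[k] (_ : Fin (a + 2 + b)), A) →ₗ[k] ⨂[k] (_ : Fin (a + 1 + b)), A :=
  (midAssemble a b).toLinearMap ∘ₗ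
    LinearMap.rTensor _ (LinearMap.lTensor _ g) ∘ₗ (midSplit a b).toLinearMap

variable {C : Type*} [AddCommGroup C] [Module k C] [Coalgebra k C]
variable {X : Type*} [AddCommGroup X] [Module k X]

/-- The 0-th coface map `d_0^n(ν)(x) = Σ m(x₍1₎) ∘ (A ⊗ ν(x₍0₎))`. -/
def d0 (ρ : X →ₗ[k] X ⊗[k] C) (m : C →ₗ[k] (A ⊗[k] A →ₗ[k] A)) (n : ℕ)
    (ν : X →ₗ[k] ((⨂[k] (_ : Fin n), A) →ₗ[k] A)) :
    X →ₗ[k] ((⨂[k] (_ : Fin (n + 1)), A) →ₗ[k] A) :=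
  TensorProduct.lift (LinearMap.mk₂ k
    (fun x c => (m c) ∘ₗ LinearMap.lTensor A (ν x) ∘ₗ (splitFirst n).toLinearMap)
    (by intro x y c
        simp [map_add, LinearMap.lTensor_add, LinearMap.comp_add, LinearMap.add_comp])
    (by intro a x c
        simp [map_smul, LinearMap.lTensor_smul, LinearMap.comp_smul, LinearMap.smul_comp])
    (by intro x c c'
        simp [map_add, LinearMap.add_comp])
    (by intro a x c
        simp [map_smul, LinearMap.smul_comp])) ∘ₗ ρ

/-- The last coface map `d_{n+1}^n(ν)(x) = Σ m(x₍1₎) ∘ (ν(x₍0₎) ⊗ A)`. -/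
def dlast (ρ : X →ₗ[k] X ⊗[k] C) (m : C →ₗ[k] (A ⊗[k] A →ₗ[k] A)) (n : ℕ)
    (ν : X →ₗ[k] ((⨂[k] (_ : Fin n), A) →ₗ[k] A)) :
    X →ₗ[k] ((⨂[k] (_ : Fin (n + 1)), A) →ₗ[k] A) :=
  TensorProduct.lift (LinearMap.mk₂ k
    (fun x c => (m c) ∘ₗ LinearMap.rTensor A (ν x) ∘ₗ (splitLast n).toLinearMap)
    (by intro x y c
        simp [map_add, LinearMap.rTensor_add, LinearMap.comp_add, LinearMap.add_comp])
    (by intro a x c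
        simp [map_smul, LinearMap.rTensor_smul, LinearMap.comp_smul, LinearMap.smul_comp])
    (by intro x c c'
        simp [map_add, LinearMap.add_comp])
    (by intro a x c
        simp [map_smul, LinearMap.smul_comp])) ∘ₗ ρ

/-- The middle coface maps
`d_i^n(ν)(x) = Σ ν(x₍0₎) ∘ (A^{⊗(i-1)} ⊗ m(x₍1₎) ⊗ A^{⊗(n-i)})`, with `a = i - 1`,
`b = n - i`. -/
def dmid (ρ : X →ₗ[k] X ⊗[k] C) (m : C →ₗ[k] (A ⊗[k] A →ₗ[k] A)) (a b : ℕ)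
    (ν : X →ₗ[k] ((⨂[k] (_ : Fin (a + 1 + b)), A) →ₗ[k] A)) :
    X →ₗ[k] ((⨂[k] (_ : Fin (a + 2 + b)), A) →ₗ[k] A) :=
  TensorProduct.lift (LinearMap.mk₂ k
    (fun x c => (ν x) ∘ₗ insertMul a b (m c))
    (by intro x y c
        simp [map_add, LinearMap.add_comp])
    (by intro r x c
        simp [map_smul, LinearMap.smul_comp])
    (by intro x c c'
        simp [insertMul, map_add, LinearMap.lTensor_add, LinearMap.rTensor_add,
          LinearMap.comp_add, LinearMap.add_comp])
    (by intro r x c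
        simp [insertMul, map_smul, LinearMap.lTensor_smul, LinearMap.rTensor_smul,
          LinearMap.comp_smul, LinearMap.smul_comp])) ∘ₗ ρ

/-- The `i`-th middle coface map at cochain degree `n`, recast to live on `A^{⊗(n+1)}`. -/
def dmidCast (ρ : X →ₗ[k] X ⊗[k] C) (m : C →ₗ[k] (A ⊗[k] A →ₗ[k] A)) (n : ℕ) (i : Fin n)
    (ν : X →ₗ[k] ((⨂[k] (_ : Fin n), A) →ₗ[k] A)) :
    X →ₗ[k] ((⨂[k] (_ : Fin (n + 1)), A) →ₗ[k] A) :=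
  have hi : (i : ℕ) < n := i.isLt
  (LinearMap.lcomp k A (tcastA (show n + 1 = (i : ℕ) + 2 + (n - 1 - (i : ℕ)) by
      omega)).toLinearMap) ∘ₗ
    dmid ρ m (i : ℕ) (n - 1 - (i : ℕ))
      ((LinearMap.lcomp k A (tcastA (show (i : ℕ) + 1 + (n - 1 - (i : ℕ)) = n by
        omega)).toLinearMap) ∘ₗ ν)

/-- The differential `d_X^n = Σ_{i=0}^{n+1} (−1)^i d_i^n` of the complex `C_X^*(A, m)`. -/
def dX (ρ : X →ₗ[k] X ⊗[k] C) (m : C →ₗ[k] (A ⊗[k] A →ₗ[k] A)) (n : ℕ)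
    (ν : X →ₗ[k] ((⨂[k] (_ : Fin n), A) →ₗ[k] A)) :
    X →ₗ[k] ((⨂[k] (_ : Fin (n + 1)), A) →ₗ[k] A) :=
  d0 ρ m n ν + ((-1 : ℤ) ^ (n + 1)) • dlast ρ m n ν +
    ∑ i : Fin n, ((-1 : ℤ) ^ ((i : ℕ) + 1)) • dmidCast ρ m n i ν

/-- Convolution-associativity of `m : C → Hom(A⊗A, A)`:
`Σ m(c₍₁₎)∘(m(c₍₂₎)⊗A) = Σ m(c₍₁₎)∘(A⊗m(c₍₂₎))` as maps `(A⊗A)⊗A → A`. -/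
def ConvAssoc (m : C →ₗ[k] (A ⊗[k] A →ₗ[k] A)) : Prop :=
  TensorProduct.lift (LinearMap.mk₂ k
      (fun c c' => (m c) ∘ₗ LinearMap.rTensor A (m c'))
      (by intro x y c; simp [map_add, LinearMap.add_comp])
      (by intro r x c; simp [map_smul, LinearMap.smul_comp])
      (by intro x c c'
          simp [map_add, LinearMap.rTensor_add, LinearMap.comp_add])
      (by intro r x c
          simp [map_smul, LinearMap.rTensor_smul, LinearMap.comp_smul])) ∘ₗ
    (Coalgebra.comul : C →ₗ[k] C ⊗[k] C) =
  TensorProduct.lift (LinearMap.mk₂ k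
      (fun c c' => (m c) ∘ₗ LinearMap.lTensor A (m c') ∘ₗ
        (TensorProduct.assoc k A A A).toLinearMap)
      (by intro x y c; simp [map_add, LinearMap.add_comp])
      (by intro r x c; simp [map_smul, LinearMap.smul_comp])
      (by intro x c c'
          simp [map_add, LinearMap.lTensor_add, LinearMap.comp_add, LinearMap.add_comp])
      (by intro r x c
          simp [map_smul, LinearMap.lTensor_smul, LinearMap.comp_smul,
            LinearMap.smul_comp])) ∘ₗ
    (Coalgebra.comul : C →ₗ[k] C ⊗[k] C)

end DefCx

end

/-!
Both composites are sums, over the iterated coaction `x₍0₎₍0₎ ⊗ x₍0₎₍1₎ ⊗ x₍1₎`, of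
`Φ ∘ (id_{A⊗A} ⊗ ν(x₍0₎₍0₎))` for an operation `Φ : (A ⊗ A) ⊗ A → A`: namely
`Φ = m(x₍0₎₍1₎) ∘ (m(x₍1₎) ⊗ id)` for `d_1 d_0` and `Φ = m(x₍1₎) ∘ (id ⊗ m(x₍0₎₍1₎))` for `d_0 d_0`.
Coassociativity of the coaction turns the iterated coaction into `x₍0₎ ⊗ Δ(x₍1₎)`; after
cocommutativity swaps the two legs of `Δ` in the second operation, the two agree by
convolution-associativity of `m`.
-/

noncomputable section

namespace DefCx

variable {k : Type*} [Field k] {A : Type*} [AddCommGroup A] [Module k A]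

def splitFirstTwo (n : ℕ) :
    (⨂[k] (_ : Fin (n + 2)), A) ≃ₗ[k] (A ⊗[k] A) ⊗[k] (⨂[k] (_ : Fin n), A) :=
  (((TensorProduct.congr (pairE (k := k) (A := A)) (LinearEquiv.refl k _)).trans
    (glueA 2 n)).trans (tcastA (by omega))).symm

lemma splitFirst_tprod (n : ℕ) (f : Fin (n + 1) → A) :
    splitFirst (k := k) n (tprod k f) = f 0 ⊗ₜ[k] tprod k (fun i => f i.succ) := by
  simp only [splitFirst, oneE, glueA, tcastA, LinearEquiv.trans_symm, reindex_symm, finCongr_symm,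
    LinearEquiv.trans_apply, reindex_tprod, finCongr_apply, Equiv.symm_symm, tmulEquiv_symm_apply,
    finSumFinEquiv_apply_left, finSumFinEquiv_apply_right, Fin.cast_natAdd, Fin.addNat_one,
    congr_symm_tmul, LinearEquiv.symm_symm, subsingletonEquiv_apply_tprod, LinearEquiv.refl_symm,
    LinearEquiv.refl_apply]
  rfl

lemma splitFirstTwo_tprod (n : ℕ) (f : Fin (n + 2) → A) :
    splitFirstTwo (k := k) n (tprod k f) =
      (f 0 ⊗ₜ[k] f 1) ⊗ₜ[k] tprod k (fun i => f i.succ.succ) := by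
  simp only [splitFirstTwo, pairE, oneE, glueA, tcastA, LinearEquiv.trans_symm, reindex_symm,
    finCongr_symm, LinearEquiv.trans_apply, reindex_tprod, finCongr_apply, Equiv.symm_symm,
    tmulEquiv_symm_apply, finSumFinEquiv_apply_left, finSumFinEquiv_apply_right, Fin.cast_natAdd,
    congr_symm_tmul, LinearEquiv.symm_symm, subsingletonEquiv_apply_tprod, LinearEquiv.refl_symm,
    LinearEquiv.refl_apply]
  rfl

/-- The exponents are those `dmidCast` produces at position `0` in degree `n + 1`. -/
lemma splitFirst_comp_insertMul_zero (n : ℕ) (g : A ⊗[k] A →ₗ[k] A) :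
    (splitFirst (k := k) n).toLinearMap ∘ₗ
        (tcastA (show 0 + 1 + (n + 1 - 1 - 0) = n + 1 by omega)).toLinearMap ∘ₗ
        insertMul 0 (n + 1 - 1 - 0) g ∘ₗ
        (tcastA (show n + 1 + 1 = 0 + 2 + (n + 1 - 1 - 0) by omega)).toLinearMap =
      LinearMap.rTensor _ g ∘ₗ (splitFirstTwo n).toLinearMap := by
  ext f
  simp only [insertMul, midSplit, midAssemble, pairE, oneE, glueA, tcastA, finSumFinEquiv,
    Fin.addCases, eq_rec_constant, LinearEquiv.trans_symm, reindex_symm,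
    LinearMap.compMultilinearMap_apply, LinearMap.coe_comp, LinearEquiv.coe_coe,
    Function.comp_apply, reindex_tprod, LinearEquiv.trans_apply, tmulEquiv_symm_apply,
    congr_symm_tmul, LinearEquiv.refl_symm, LinearEquiv.refl_apply, LinearEquiv.symm_symm,
    subsingletonEquiv_apply_tprod, LinearMap.rTensor_tmul, LinearMap.lTensor_tmul, congr_tmul,
    subsingletonEquiv_symm_apply', tmulEquiv_apply, splitFirst_tprod, splitFirstTwo_tprod,
    Fin.cast_cast, Fin.cast_zero, finCongr_apply, Sum.elim_inl, Sum.elim_inr, Equiv.coe_fn_mk,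
    Equiv.symm_mk, finCongr_symm]
  congr 1
  refine congrArg (PiTensorProduct.tprod k) (funext fun i => congrArg f ?_)
  ext
  simp

lemma lTensor_splitFirst_comp_splitFirst (n : ℕ) :
    LinearMap.lTensor A (splitFirst (k := k) n).toLinearMap ∘ₗ (splitFirst (n + 1)).toLinearMap =
      (TensorProduct.assoc k A A _).toLinearMap ∘ₗ (splitFirstTwo n).toLinearMap := by
  ext f
  simp [splitFirst_tprod, splitFirstTwo_tprod]

variable {C : Type*} [AddCommGroup C] [Module k C]

def mulLeftAssoc (m : C →ₗ[k] (A ⊗[k] A →ₗ[k] A)) :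
    C ⊗[k] C →ₗ[k] ((A ⊗[k] A) ⊗[k] A →ₗ[k] A) :=
  TensorProduct.lift (LinearMap.mk₂ k
    (fun c c' => (m c) ∘ₗ LinearMap.rTensor A (m c'))
    (by intros; simp [LinearMap.add_comp])
    (by intros; simp [LinearMap.smul_comp])
    (by intros; simp [LinearMap.rTensor_add, LinearMap.comp_add])
    (by intros; simp [LinearMap.rTensor_smul, LinearMap.comp_smul]))

def mulRightAssoc (m : C →ₗ[k] (A ⊗[k] A →ₗ[k] A)) :
    C ⊗[k] C →ₗ[k] ((A ⊗[k] A) ⊗[k] A →ₗ[k] A) :=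
  TensorProduct.lift (LinearMap.mk₂ k
    (fun c c' => (m c) ∘ₗ LinearMap.lTensor A (m c') ∘ₗ (TensorProduct.assoc k A A A).toLinearMap)
    (by intros; simp [LinearMap.add_comp])
    (by intros; simp [LinearMap.smul_comp])
    (by intros; simp [LinearMap.lTensor_add, LinearMap.comp_add, LinearMap.add_comp])
    (by intros; simp [LinearMap.lTensor_smul, LinearMap.comp_smul, LinearMap.smul_comp]))

lemma ConvAssoc.mulLeftAssoc_comp_comul [Coalgebra k C] {m : C →ₗ[k] (A ⊗[k] A →ₗ[k] A)}
    (hm : ConvAssoc m)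
    (hcocomm : (TensorProduct.comm k C C).toLinearMap ∘ₗ
      (Coalgebra.comul : C →ₗ[k] C ⊗[k] C) = Coalgebra.comul) :
    mulLeftAssoc m ∘ₗ (Coalgebra.comul : C →ₗ[k] C ⊗[k] C) =
      (mulRightAssoc m ∘ₗ (TensorProduct.comm k C C).toLinearMap) ∘ₗ Coalgebra.comul := by
  rw [LinearMap.comp_assoc, hcocomm]
  exact hm

variable {X : Type*} [AddCommGroup X] [Module k X]

def mulPairCochain {D : Type*} [AddCommGroup D] [Module k D]
    (L : D →ₗ[k] ((A ⊗[k] A) ⊗[k] A →ₗ[k] A)) (n : ℕ)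
    (ν : X →ₗ[k] ((⨂[k] (_ : Fin n), A) →ₗ[k] A)) :
    X ⊗[k] D →ₗ[k] ((⨂[k] (_ : Fin (n + 2)), A) →ₗ[k] A) :=
  TensorProduct.lift (LinearMap.mk₂ k
    (fun x z => (L z) ∘ₗ LinearMap.lTensor (A ⊗[k] A) (ν x) ∘ₗ (splitFirstTwo n).toLinearMap)
    (by intros; simp [LinearMap.lTensor_add, LinearMap.comp_add, LinearMap.add_comp])
    (by intros; simp [LinearMap.lTensor_smul, LinearMap.comp_smul, LinearMap.smul_comp])
    (by intros; simp [LinearMap.add_comp])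
    (by intros; simp [LinearMap.smul_comp]))

lemma mulPairCochain_comp_lTensor {D D' : Type*} [AddCommGroup D] [Module k D]
    [AddCommGroup D'] [Module k D'] (L : D →ₗ[k] ((A ⊗[k] A) ⊗[k] A →ₗ[k] A)) (f : D' →ₗ[k] D)
    (n : ℕ) (ν : X →ₗ[k] ((⨂[k] (_ : Fin n), A) →ₗ[k] A)) :
    mulPairCochain L n ν ∘ₗ LinearMap.lTensor X f = mulPairCochain (L ∘ₗ f) n ν :=
  TensorProduct.ext' fun _ _ => rfl

def d0Lift (m : C →ₗ[k] (A ⊗[k] A →ₗ[k] A)) (n : ℕ)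
    (ν : X →ₗ[k] ((⨂[k] (_ : Fin n), A) →ₗ[k] A)) :
    X ⊗[k] C →ₗ[k] ((⨂[k] (_ : Fin (n + 1)), A) →ₗ[k] A) :=
  TensorProduct.lift (LinearMap.mk₂ k
    (fun x c => (m c) ∘ₗ LinearMap.lTensor A (ν x) ∘ₗ (splitFirst n).toLinearMap)
    (by intros; simp [LinearMap.lTensor_add, LinearMap.comp_add, LinearMap.add_comp])
    (by intros; simp [LinearMap.lTensor_smul, LinearMap.comp_smul, LinearMap.smul_comp])
    (by intros; simp [LinearMap.add_comp])
    (by intros; simp [LinearMap.smul_comp]))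

def d1Lift (m : C →ₗ[k] (A ⊗[k] A →ₗ[k] A)) (n : ℕ)
    (μ : X →ₗ[k] ((⨂[k] (_ : Fin (n + 1)), A) →ₗ[k] A)) :
    X ⊗[k] C →ₗ[k] ((⨂[k] (_ : Fin (n + 2)), A) →ₗ[k] A) :=
  TensorProduct.lift (LinearMap.mk₂ k
    (fun x c => μ x ∘ₗ
        (tcastA (show 0 + 1 + (n + 1 - 1 - 0) = n + 1 by omega)).toLinearMap ∘ₗ
        insertMul 0 (n + 1 - 1 - 0) (m c) ∘ₗ
        (tcastA (show n + 1 + 1 = 0 + 2 + (n + 1 - 1 - 0) by omega)).toLinearMap)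
    (by intros; simp [LinearMap.add_comp])
    (by intros; simp [LinearMap.smul_comp])
    (by intros; simp [insertMul, LinearMap.lTensor_add, LinearMap.rTensor_add,
          LinearMap.comp_add, LinearMap.add_comp])
    (by intros; simp [insertMul, LinearMap.lTensor_smul, LinearMap.rTensor_smul,
          LinearMap.comp_smul, LinearMap.smul_comp]))

lemma d0_eq_d0Lift_comp (ρ : X →ₗ[k] X ⊗[k] C) (m : C →ₗ[k] (A ⊗[k] A →ₗ[k] A)) (n : ℕ)
    (ν : X →ₗ[k] ((⨂[k] (_ : Fin n), A) →ₗ[k] A)) :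
    d0 ρ m n ν = d0Lift m n ν ∘ₗ ρ := rfl

lemma dmidCast_zero_eq_d1Lift_comp (ρ : X →ₗ[k] X ⊗[k] C) (m : C →ₗ[k] (A ⊗[k] A →ₗ[k] A))
    (n : ℕ) (μ : X →ₗ[k] ((⨂[k] (_ : Fin (n + 1)), A) →ₗ[k] A)) :
    dmidCast ρ m (n + 1) ⟨0, Nat.succ_pos n⟩ μ = d1Lift m n μ ∘ₗ ρ := by
  ext x : 1
  simp only [dmidCast, dmid, LinearMap.comp_apply, d1Lift]
  induction ρ x using TensorProduct.induction_on with
  | zero => simp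
  | tmul y c => simp [LinearMap.lcomp_apply', LinearMap.comp_assoc]
  | add u v hu hv => simp only [map_add, hu, hv]

variable {Y : Type*} [AddCommGroup Y] [Module k Y]

lemma d0Lift_comp (m : C →ₗ[k] (A ⊗[k] A →ₗ[k] A)) (n : ℕ)
    (ν : X →ₗ[k] ((⨂[k] (_ : Fin n), A) →ₗ[k] A)) (f : Y →ₗ[k] X) :
    d0Lift m n (ν ∘ₗ f) = d0Lift m n ν ∘ₗ LinearMap.rTensor C f :=
  TensorProduct.ext' fun _ _ => rfl

lemma d1Lift_comp (m : C →ₗ[k] (A ⊗[k] A →ₗ[k] A)) (n : ℕ)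
    (μ : X →ₗ[k] ((⨂[k] (_ : Fin (n + 1)), A) →ₗ[k] A)) (f : Y →ₗ[k] X) :
    d1Lift m n (μ ∘ₗ f) = d1Lift m n μ ∘ₗ LinearMap.rTensor C f :=
  TensorProduct.ext' fun _ _ => rfl

lemma d1Lift_d0Lift (m : C →ₗ[k] (A ⊗[k] A →ₗ[k] A)) (n : ℕ)
    (ν : X →ₗ[k] ((⨂[k] (_ : Fin n), A) →ₗ[k] A)) :
    d1Lift m n (d0Lift m n ν) =
      mulPairCochain (mulLeftAssoc m) n ν ∘ₗ (TensorProduct.assoc k X C C).toLinearMap := by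
  refine TensorProduct.ext_threefold fun x c c' => LinearMap.ext fun z => ?_
  have h := LinearMap.congr_fun (splitFirst_comp_insertMul_zero (k := k) (A := A) n (m c')) z
  simp only [LinearMap.comp_apply, LinearEquiv.coe_coe] at h
  simp only [d1Lift, d0Lift, mulPairCochain, mulLeftAssoc, TensorProduct.lift.tmul,
    LinearMap.mk₂_apply, TensorProduct.assoc_tmul, LinearMap.comp_apply, LinearEquiv.coe_coe, h]
  simp only [← LinearMap.comp_apply, LinearMap.lTensor_comp_rTensor,
    LinearMap.rTensor_comp_lTensor]

lemma d0Lift_d0Lift (m : C →ₗ[k] (A ⊗[k] A →ₗ[k] A)) (n : ℕ)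
    (ν : X →ₗ[k] ((⨂[k] (_ : Fin n), A) →ₗ[k] A)) :
    d0Lift m (n + 1) (d0Lift m n ν) =
      mulPairCochain (mulRightAssoc m ∘ₗ (TensorProduct.comm k C C).toLinearMap) n ν ∘ₗ
        (TensorProduct.assoc k X C C).toLinearMap := by
  refine TensorProduct.ext_threefold fun x c c' => LinearMap.ext fun z => ?_
  have h := LinearMap.congr_fun (lTensor_splitFirst_comp_splitFirst (k := k) (A := A) n) z
  simp only [LinearMap.comp_apply, LinearEquiv.coe_coe] at h
  simp only [d0Lift, mulPairCochain, mulRightAssoc, TensorProduct.lift.tmul, LinearMap.mk₂_apply,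
    TensorProduct.assoc_tmul, TensorProduct.comm_tmul, LinearMap.comp_apply, LinearEquiv.coe_coe,
    LinearMap.lTensor_comp, h]
  simp only [LinearMap.lTensor, TensorProduct.map_id,
    TensorProduct.map_map_assoc LinearMap.id LinearMap.id (ν x)]

end DefCx

end

open DefCx in
theorem coface_d1_d0_eq_d0_d0 {k : Type*} [Field k] {A C X : Type*}
    [AddCommGroup A] [Module k A]
    [AddCommGroup C] [Module k C] [Coalgebra k C]
    [AddCommGroup X] [Module k X]
    (hcocomm : (TensorProduct.comm k C C).toLinearMap ∘ₗ
      (Coalgebra.comul : C →ₗ[k] C ⊗[k] C) = Coalgebra.comul)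
    (ρ : X →ₗ[k] X ⊗[k] C)
    (hcoassoc : (TensorProduct.assoc k X C C).toLinearMap ∘ₗ LinearMap.rTensor C ρ ∘ₗ ρ =
      LinearMap.lTensor X (Coalgebra.comul : C →ₗ[k] C ⊗[k] C) ∘ₗ ρ)
    (m : C →ₗ[k] (A ⊗[k] A →ₗ[k] A))
    (hm : ConvAssoc m) :
    ∀ (n : ℕ) (ν : X →ₗ[k] ((⨂[k] (_ : Fin n), A) →ₗ[k] A)),
      dmidCast ρ m (n + 1) (⟨0, Nat.succ_pos n⟩ : Fin (n + 1)) (d0 ρ m n ν) =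
        d0 ρ m (n + 1) (d0 ρ m n ν) := by
  intro n ν
  simp only [dmidCast_zero_eq_d1Lift_comp, d0_eq_d0Lift_comp, d1Lift_comp, d0Lift_comp,
    d1Lift_d0Lift, d0Lift_d0Lift, LinearMap.comp_assoc, hcoassoc]
  simp only [← LinearMap.comp_assoc, mulPairCochain_comp_lTensor,
    hm.mulLeftAssoc_comp_comul hcocomm]
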